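/- arXiv:2311.01196 — 4 statements merged into one kernel-verified Lean document; each statement's English description precedes it below -/
import Mathlib

section
/- Let N ≥ 1 and let h_1, …, h_N be unit vectors in ℝ^d, and let t > 0 and Z > 0 be real constants. Define the von Mises–Fisher kernel density estimate p̂(x) = (1/(N·Z)) · ∑_{j=1}^N exp(2t·⟨x, h_j⟩) and the resubstitution entropy estimator Ĥ = -(1/N) · ∑_{i=1}^N log p̂(h_i). Then (1/N) · ∑_{i=1}^N log( (1/N) · ∑_{j=1}^N exp(-t·‖h_i − h_j‖²) ) = log Z − 2t − Ĥ. Consequently the average per-anchor logarithmic Gaussian-kernel uniformity loss is a strictly decreasing affine function of the entropy estimator Ĥ, so a higher estimated entropy of the representation corresponds exactly to a higher uniformity. -/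
open scoped RealInnerProductSpace BigOperators

/-- the average per-anchor logarithmic Gaussian-kernel uniformity loss
equals `log Z - 2t - Ĥ`, where `Ĥ` is the vMF-KDE resubstitution entropy estimator. -/
theorem stmt_0 {d N : ℕ} (hN : 1 ≤ N)
    (h : Fin N → EuclideanSpace ℝ (Fin d))
    (hunit : ∀ i, ‖h i‖ = 1)
    (t Z : ℝ) (ht : 0 < t) (hZ : 0 < Z) :
    let phat : EuclideanSpace ℝ (Fin d) → ℝ :=
      fun x => (1 / ((N : ℝ) * Z)) * ∑ j, Real.exp (2 * t * ⟪x, h j⟫)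
    let Hhat : ℝ := -(1 / (N : ℝ)) * ∑ i, Real.log (phat (h i))
    (1 / (N : ℝ)) *
        ∑ i, Real.log ((1 / (N : ℝ)) * ∑ j, Real.exp (-t * ‖h i - h j‖ ^ 2))
      = Real.log Z - 2 * t - Hhat := by
  intro phat Hhat
  have hNpos : (0 : ℝ) < N := by exact_mod_cast lt_of_lt_of_le one_pos hN
  have hNne : (N : ℝ) ≠ 0 := ne_of_gt hNpos
  have hsq : ∀ i j, ‖h i - h j‖ ^ 2 = 2 - 2 * ⟪h i, h j⟫ := by
    intro i j
    have := norm_sub_sq_real (h i) (h j)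
    rw [this, hunit i, hunit j]; ring
  have key : ∀ i, (1 / (N : ℝ)) * ∑ j, Real.exp (-t * ‖h i - h j‖ ^ 2)
      = Real.exp (-(2 * t)) * (Z * phat (h i)) := by
    intro i
    have : ∀ j, Real.exp (-t * ‖h i - h j‖ ^ 2)
        = Real.exp (-(2 * t)) * Real.exp (2 * t * ⟪h i, h j⟫) := by
      intro j
      rw [← Real.exp_add, hsq]
      ring_nf
    simp only [this, ← Finset.mul_sum]
    simp only [phat]
    field_simp
  have hsumpos : ∀ i, 0 < ∑ j, Real.exp (2 * t * ⟪h i, h j⟫) := by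
    intro i
    apply Finset.sum_pos (fun j _ => Real.exp_pos _)
    exact Finset.univ_nonempty_iff.mpr (Fin.pos_iff_nonempty.mp (lt_of_lt_of_le one_pos hN))
  have hphatpos : ∀ i, 0 < phat (h i) := by
    intro i
    exact mul_pos (by positivity) (hsumpos i)
  have hlog : ∀ i, Real.log ((1 / (N : ℝ)) * ∑ j, Real.exp (-t * ‖h i - h j‖ ^ 2))
      = -(2 * t) + Real.log Z + Real.log (phat (h i)) := by
    intro i
    rw [key i, Real.log_mul (Real.exp_ne_zero _) (ne_of_gt (mul_pos hZ (hphatpos i))),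
      Real.log_mul (ne_of_gt hZ) (ne_of_gt (hphatpos i)), Real.log_exp]
    ring
  simp only [hlog]
  rw [Finset.sum_add_distrib, Finset.sum_add_distrib, Finset.sum_const, Finset.sum_const,
    Finset.card_univ, Fintype.card_fin]
  simp only [Hhat, nsmul_eq_mul]
  field_simp
  ring
end

section
/- Let N ≥ 1 and let h_1, …, h_N be unit vectors in ℝ^d, and let t > 0 and Z > 0 be real constants. Define the von Mises–Fisher kernel density estimate p̂(x) = (1/(N·Z)) · ∑_{j=1}^N exp(2t·⟨x, h_j⟩) and the resubstitution entropy estimator Ĥ = -(1/N) · ∑_{i=1}^N log p̂(h_i). Then the Gaussian-kernel uniformity loss R = (1/N²) · ∑_{i=1}^N ∑_{j=1}^N exp(-t·‖h_i − h_j‖²) satisfies log R ≥ log Z − 2t − Ĥ, equivalently R ≥ Z · e^{−2t} · e^{−Ĥ}. In particular a small uniformity loss forces a large entropy estimator: Ĥ ≥ log Z − 2t − log R. -/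
/-!
On the unit sphere `‖x - y‖² = 2 - 2⟪x, y⟫`, so the Gaussian kernel is `e^{-2t}` times the
von Mises–Fisher kernel and `R = Z e^{-2t} · (1/N) ∑ᵢ p̂(hᵢ)`. By Jensen's inequality for `exp`
(AM–GM), this arithmetic mean of the `p̂(hᵢ)` dominates their geometric mean `e^{-Ĥ}`.
-/

open scoped RealInnerProductSpace
open Finset Real

theorem Real.exp_neg_mul_norm_sub_sq_of_norm_eq_one {E : Type*} [NormedAddCommGroup E]
    [InnerProductSpace ℝ E] {x y : E} (hx : ‖x‖ = 1) (hy : ‖y‖ = 1) (t : ℝ) :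
    exp (-t * ‖x - y‖ ^ 2) = exp (-(2 * t)) * exp (2 * t * ⟪x, y⟫) := by
  rw [← exp_add, norm_sub_sq_real, hx, hy]
  ring_nf

theorem Real.exp_mean_log_le_mean {ι : Type*} {s : Finset ι} (hs : s.Nonempty) {f : ι → ℝ}
    (hf : ∀ i ∈ s, 0 < f i) :
    exp ((1 / #s) * ∑ i ∈ s, log (f i)) ≤ (1 / #s) * ∑ i ∈ s, f i := by
  have hweights : ∑ _i ∈ s, (1 / #s : ℝ) = 1 := by
    simp [hs.card_pos.ne']
  calc exp ((1 / #s) * ∑ i ∈ s, log (f i))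
      = exp (∑ i ∈ s, (1 / #s : ℝ) • log (f i)) := by rw [mul_sum]; rfl
    _ ≤ ∑ i ∈ s, (1 / #s : ℝ) • exp (log (f i)) :=
        convexOn_exp.map_sum_le (fun _ _ => by positivity) hweights (fun _ _ => Set.mem_univ _)
    _ = (1 / #s) * ∑ i ∈ s, f i := by
        rw [mul_sum]
        exact sum_congr rfl fun i hi => by rw [smul_eq_mul, exp_log (hf i hi)]

theorem stmt_1_general {d N : ℕ} (hN : 1 ≤ N)
    (h : Fin N → EuclideanSpace ℝ (Fin d))
    (hunit : ∀ i, ‖h i‖ = 1)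
    (t Z : ℝ) (hZ : 0 < Z) :
    let phat : EuclideanSpace ℝ (Fin d) → ℝ :=
      fun x => (1 / ((N : ℝ) * Z)) * ∑ j, Real.exp (2 * t * ⟪x, h j⟫)
    let Hhat : ℝ := -(1 / (N : ℝ)) * ∑ i, Real.log (phat (h i))
    let R : ℝ := (1 / (N : ℝ) ^ 2) * ∑ i, ∑ j, Real.exp (-t * ‖h i - h j‖ ^ 2)
    Real.log R ≥ Real.log Z - 2 * t - Hhat ∧
    R ≥ Z * Real.exp (-(2 * t)) * Real.exp (-Hhat) ∧
    Hhat ≥ Real.log Z - 2 * t - Real.log R := by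
  intro phat Hhat R
  have hNpos : (0 : ℝ) < N := by exact_mod_cast hN
  have hne : (univ : Finset (Fin N)).Nonempty := univ_nonempty_iff.mpr ⟨⟨0, hN⟩⟩
  have hphat : ∀ i, 0 < phat (h i) := fun i =>
    mul_pos (by positivity) (sum_pos (fun _ _ => exp_pos _) hne)
  have hR : R = Z * exp (-(2 * t)) * ((1 / N) * ∑ i, phat (h i)) := by
    simp only [R, phat, exp_neg_mul_norm_sub_sq_of_norm_eq_one (hunit _) (hunit _), ← mul_sum]
    field_simp
  have hjensen : exp (-Hhat) ≤ (1 / N) * ∑ i, phat (h i) := by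
    simpa [Hhat] using exp_mean_log_le_mean hne fun i _ => hphat i
  have hlower : Z * exp (-(2 * t)) * exp (-Hhat) ≤ R :=
    hR ▸ mul_le_mul_of_nonneg_left hjensen (by positivity)
  have hlog : log Z - 2 * t - Hhat ≤ log R := by
    have := log_le_log (by positivity) hlower
    rwa [log_mul (by positivity) (exp_ne_zero _), log_mul hZ.ne' (exp_ne_zero _), log_exp,
      log_exp, ← sub_eq_add_neg, ← sub_eq_add_neg] at this
  exact ⟨hlog, hlower, by linarith⟩

/-- the Gaussian-kernel uniformity loss `R` satisfies
`log R ≥ log Z - 2t - Ĥ`, equivalently `R ≥ Z·e^{-2t}·e^{-Ĥ}`, and in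
particular `Ĥ ≥ log Z - 2t - log R`. -/
theorem stmt_1 {d N : ℕ} (hN : 1 ≤ N)
    (h : Fin N → EuclideanSpace ℝ (Fin d))
    (hunit : ∀ i, ‖h i‖ = 1)
    (t Z : ℝ) (ht : 0 < t) (hZ : 0 < Z) :
    let phat : EuclideanSpace ℝ (Fin d) → ℝ :=
      fun x => (1 / ((N : ℝ) * Z)) * ∑ j, Real.exp (2 * t * ⟪x, h j⟫)
    let Hhat : ℝ := -(1 / (N : ℝ)) * ∑ i, Real.log (phat (h i))
    let R : ℝ := (1 / (N : ℝ) ^ 2) * ∑ i, ∑ j, Real.exp (-t * ‖h i - h j‖ ^ 2)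
    Real.log R ≥ Real.log Z - 2 * t - Hhat ∧
    R ≥ Z * Real.exp (-(2 * t)) * Real.exp (-Hhat) ∧
    Hhat ≥ Real.log Z - 2 * t - Real.log R :=
  stmt_1_general hN h hunit t Z hZ
end

section
/- Let X and Y be random variables into finite types 𝒳 and 𝒴 on a finite probability space, with joint pmf p(x,y), marginals p_X and p_Y, and conditional pmf p(y|x) = p(x,y)/p_X(x) defined whenever p_X(x) > 0. Let q be any pmf on 𝒴 with q(y) > 0 whenever p_Y(y) > 0. Then I(X;Y) = ∑_{x : p_X(x)>0} p_X(x) · KL(p(·|x) ‖ q) − KL(p_Y ‖ q), and consequently I(X;Y) ≤ ∑_{x : p_X(x)>0} p_X(x) · KL(p(·|x) ‖ q), i.e., the mutual information is upper-bounded by the expected Kullback–Leibler divergence of the conditional distributions from any fixed variational marginal q. -/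
open scoped Classical BigOperators

/-- The probability mass function of a random variable `X` under weights `P`. -/
noncomputable def pm {Ω α : Type*} [Fintype Ω] [Fintype α]
    (P : Ω → ℝ) (X : Ω → α) (x : α) : ℝ :=
  ∑ ω, if X ω = x then P ω else 0

/-- Shannon entropy (natural log, convention `0 * log 0 = 0`). -/
noncomputable def Hf {Ω α : Type*} [Fintype Ω] [Fintype α]
    (P : Ω → ℝ) (X : Ω → α) : ℝ :=
  -∑ x, pm P X x * Real.log (pm P X x)

/-- Mutual information `I(X;Y) = H(X) + H(Y) - H(X,Y)`. -/
noncomputable def MI {Ω α β : Type*} [Fintype Ω] [Fintype α] [Fintype β]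
    (P : Ω → ℝ) (X : Ω → α) (Y : Ω → β) : ℝ :=
  Hf P X + Hf P Y - Hf P (fun ω => (X ω, Y ω))

/-- Conditional entropy `H(X|Y) = H(X,Y) - H(Y)`. -/
noncomputable def CE {Ω α β : Type*} [Fintype Ω] [Fintype α] [Fintype β]
    (P : Ω → ℝ) (X : Ω → α) (Y : Ω → β) : ℝ :=
  Hf P (fun ω => (X ω, Y ω)) - Hf P Y

/-- Conditional mutual information
`I(X;Y|Z) = H(X,Z) + H(Y,Z) - H(X,Y,Z) - H(Z)`. -/
noncomputable def CMI {Ω α β γ : Type*} [Fintype Ω] [Fintype α] [Fintype β] [Fintype γ]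
    (P : Ω → ℝ) (X : Ω → α) (Y : Ω → β) (Z : Ω → γ) : ℝ :=
  Hf P (fun ω => (X ω, Z ω)) + Hf P (fun ω => (Y ω, Z ω))
    - Hf P (fun ω => (X ω, Y ω, Z ω)) - Hf P Z

/-- `X` and `Y` are conditionally independent given `Z`. -/
def CondIndep {Ω α β γ : Type*} [Fintype Ω] [Fintype α] [Fintype β] [Fintype γ]
    (P : Ω → ℝ) (X : Ω → α) (Y : Ω → β) (Z : Ω → γ) : Prop :=
  ∀ x y z, pm P (fun ω => (X ω, Y ω, Z ω)) (x, y, z) * pm P Z z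
    = pm P (fun ω => (X ω, Z ω)) (x, z) * pm P (fun ω => (Y ω, Z ω)) (y, z)

/-- Kullback–Leibler divergence between pmfs on a finite type
(convention `0 * log (0/q) = 0`, which holds since `0 * _ = 0`). -/
noncomputable def KLdiv {α : Type*} [Fintype α] (p q : α → ℝ) : ℝ :=
  ∑ x, p x * Real.log (p x / q x)

lemma my_pm_nonneg {Ω α : Type*} [Fintype Ω] [Fintype α]
    (P : Ω → ℝ) (hP0 : ∀ ω, 0 ≤ P ω) (X : Ω → α) (x : α) : 0 ≤ pm P X x := by
  apply Finset.sum_nonneg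
  intro ω _
  split <;> simp [hP0 ω]

lemma my_pm_sum {Ω α : Type*} [Fintype Ω] [Fintype α]
    (P : Ω → ℝ) (hP1 : ∑ ω, P ω = 1) (X : Ω → α) : ∑ x, pm P X x = 1 := by
  unfold pm
  rw [Finset.sum_comm]
  simp [hP1]

lemma my_pm_fst {Ω α β : Type*} [Fintype Ω] [Fintype α] [Fintype β]
    (P : Ω → ℝ) (X : Ω → α) (Y : Ω → β) (x : α) :
    pm P X x = ∑ y, pm P (fun ω => (X ω, Y ω)) (x, y) := by
  unfold pm
  rw [Finset.sum_comm]
  refine Finset.sum_congr rfl fun ω _ => ?_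
  by_cases h : X ω = x <;> simp [Prod.ext_iff, h]

lemma my_pm_snd {Ω α β : Type*} [Fintype Ω] [Fintype α] [Fintype β]
    (P : Ω → ℝ) (X : Ω → α) (Y : Ω → β) (y : β) :
    pm P Y y = ∑ x, pm P (fun ω => (X ω, Y ω)) (x, y) := by
  unfold pm
  rw [Finset.sum_comm]
  refine Finset.sum_congr rfl fun ω _ => ?_
  by_cases h : Y ω = y <;> simp [Prod.ext_iff, h]

lemma my_gibbs {α : Type*} [Fintype α] (p q : α → ℝ)
    (hp : ∀ x, 0 ≤ p x) (hp1 : ∑ x, p x = 1)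
    (hq1 : ∑ x, q x = 1) (hpq : ∀ x, 0 < p x → 0 < q x)
    (hq0 : ∀ x, 0 ≤ q x) :
    0 ≤ KLdiv p q := by
  have key : ∀ x, p x - q x ≤ p x * Real.log (p x / q x) := by
    intro x
    rcases eq_or_lt_of_le (hp x) with h | h
    · simp [← h, hq0 x]
    · have hqx := hpq x h
      have hl := Real.log_le_sub_one_of_pos (div_pos hqx h)
      rw [Real.log_div hqx.ne' h.ne'] at hl
      rw [Real.log_div h.ne' hqx.ne']
      have : p x * (q x / p x) = q x := by field_simp
      nlinarith
  calc (0:ℝ) = ∑ x, (p x - q x) := by rw [Finset.sum_sub_distrib, hp1, hq1]; ring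
    _ ≤ ∑ x, p x * Real.log (p x / q x) := Finset.sum_le_sum fun x _ => key x
    _ = KLdiv p q := rfl

/-- variational decomposition and upper bound of mutual information:
`I(X;Y) = ∑_{x : p_X(x)>0} p_X(x)·KL(p(·|x) ‖ q) − KL(p_Y ‖ q)`, hence
`I(X;Y) ≤ ∑_{x : p_X(x)>0} p_X(x)·KL(p(·|x) ‖ q)` for any variational marginal `q`. -/
theorem stmt_6 {Ω 𝒳 𝒴 : Type*} [Fintype Ω] [Fintype 𝒳] [Fintype 𝒴]
    (P : Ω → ℝ) (hP0 : ∀ ω, 0 ≤ P ω) (hP1 : ∑ ω, P ω = 1)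
    (X : Ω → 𝒳) (Y : Ω → 𝒴)
    (q : 𝒴 → ℝ) (hq0 : ∀ y, 0 ≤ q y) (hq1 : ∑ y, q y = 1)
    (hqpos : ∀ y, 0 < pm P Y y → 0 < q y) :
    MI P X Y
      = (∑ x ∈ Finset.univ.filter (fun x => 0 < pm P X x),
          pm P X x *
            KLdiv (fun y => pm P (fun ω => (X ω, Y ω)) (x, y) / pm P X x) q)
        - KLdiv (pm P Y) q
    ∧ MI P X Y ≤ ∑ x ∈ Finset.univ.filter (fun x => 0 < pm P X x),
          pm P X x *
            KLdiv (fun y => pm P (fun ω => (X ω, Y ω)) (x, y) / pm P X x) q := by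
  set p : 𝒳 → 𝒴 → ℝ := fun x y => pm P (fun ω => (X ω, Y ω)) (x, y) with hpdef
  have hpnn : ∀ x y, 0 ≤ p x y := fun x y => my_pm_nonneg P hP0 _ _
  have hX : ∀ x, pm P X x = ∑ y, p x y := fun x => my_pm_fst P X Y x
  have hY : ∀ y, pm P Y y = ∑ x, p x y := fun y => my_pm_snd P X Y y
  have hXnn : ∀ x, 0 ≤ pm P X x := fun x => my_pm_nonneg P hP0 X x
  have hYnn : ∀ y, 0 ≤ pm P Y y := fun y => my_pm_nonneg P hP0 Y y
  have hple : ∀ x y, p x y ≤ pm P X x := by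
    intro x y
    rw [hX x]
    exact Finset.single_le_sum (fun y _ => hpnn x y) (Finset.mem_univ y)
  have hpleY : ∀ x y, p x y ≤ pm P Y y := by
    intro x y
    rw [hY y]
    exact Finset.single_le_sum (fun x _ => hpnn x y) (Finset.mem_univ x)
  -- the variational sum S
  set S := ∑ x ∈ Finset.univ.filter (fun x => 0 < pm P X x),
      pm P X x * KLdiv (fun y => p x y / pm P X x) q with hSdef
  have hS : S = ∑ x, ∑ y, p x y * Real.log (p x y / (pm P X x * q y)) := by
    rw [hSdef, Finset.sum_filter_of_ne ?_]
    · refine Finset.sum_congr rfl fun x _ => ?_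
      rcases eq_or_lt_of_le (hXnn x) with h | h
      · have hz : ∀ y, p x y = 0 := by
          intro y
          have := hple x y
          have := hpnn x y
          linarith [h.symm ▸ this]
        simp only [← h]
        rw [Finset.sum_eq_zero fun y _ => by rw [hz y]; ring]
        ring
      · unfold KLdiv
        rw [Finset.mul_sum]
        refine Finset.sum_congr rfl fun y _ => ?_
        simp only [div_div]
        field_simp
    · intro x _ hne
      by_contra hnot
      have : pm P X x = 0 := le_antisymm (not_lt.mp hnot) (hXnn x)
      exact hne (by rw [this]; ring)
  -- split logs
  have hsplit : S = (∑ x, ∑ y, p x y * Real.log (p x y))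
      - (∑ x, ∑ y, p x y * Real.log (pm P X x))
      - (∑ x, ∑ y, p x y * Real.log (q y)) := by
    rw [hS, ← Finset.sum_sub_distrib, ← Finset.sum_sub_distrib]
    refine Finset.sum_congr rfl fun x _ => ?_
    rw [← Finset.sum_sub_distrib, ← Finset.sum_sub_distrib]
    refine Finset.sum_congr rfl fun y _ => ?_
    rcases eq_or_lt_of_le (hpnn x y) with h | h
    · rw [← h]; ring
    · have hx : 0 < pm P X x := lt_of_lt_of_le h (hple x y)
      have hy : 0 < pm P Y y := lt_of_lt_of_le h (hpleY x y)
      have hq : 0 < q y := hqpos y hy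
      rw [Real.log_div h.ne' (by positivity), Real.log_mul hx.ne' hq.ne']
      ring
  have hB : (∑ x, ∑ y, p x y * Real.log (pm P X x))
      = ∑ x, pm P X x * Real.log (pm P X x) := by
    refine Finset.sum_congr rfl fun x _ => ?_
    rw [hX x, Finset.sum_mul]
  have hC : (∑ x, ∑ y, p x y * Real.log (q y))
      = ∑ y, pm P Y y * Real.log (q y) := by
    rw [Finset.sum_comm]
    refine Finset.sum_congr rfl fun y _ => ?_
    rw [hY y, Finset.sum_mul]
  have hKL : KLdiv (pm P Y) q
      = (∑ y, pm P Y y * Real.log (pm P Y y)) - ∑ y, pm P Y y * Real.log (q y) := by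
    unfold KLdiv
    rw [← Finset.sum_sub_distrib]
    refine Finset.sum_congr rfl fun y _ => ?_
    rcases eq_or_lt_of_le (hYnn y) with h | h
    · rw [← h]; ring
    · rw [Real.log_div h.ne' (hqpos y h).ne']; ring
  have hHxy : Hf P (fun ω => (X ω, Y ω)) = -∑ x, ∑ y, p x y * Real.log (p x y) := by
    unfold Hf
    rw [Fintype.sum_prod_type]
  have hMI : MI P X Y = S - KLdiv (pm P Y) q := by
    unfold MI Hf
    rw [hsplit, hB, hC, hKL]
    have := hHxy
    unfold Hf at this
    rw [Fintype.sum_prod_type]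
    ring
  refine ⟨hMI, ?_⟩
  rw [hMI]
  have h0 : 0 ≤ KLdiv (pm P Y) q :=
    my_gibbs (pm P Y) q hYnn (my_pm_sum P hP1 Y) hq1 hqpos hq0
  linarith
end

section
/- Let Ã and Ỹ be random variables into finite types on a finite probability space and let λ ∈ [0,1]. For every random variable Z into a finite type on the same space that is conditionally independent of Ỹ given Ã (the Markov chain Ỹ → Ã → Z), one has I(Z;Ỹ) − λ·I(Z;Ã) ≤ (1−λ)·I(Ã;Ỹ). Moreover, if Z* is such a random variable additionally satisfying I(Ã;Ỹ|Z*) = 0 and I(Z*;Ã|Ỹ) = 0, then I(Z*;Ỹ) − λ·I(Z*;Ã) = (1−λ)·I(Ã;Ỹ); hence Z* maximizes the objective I(Z;Ỹ) − λ·I(Z;Ã) (equivalently, minimizes the RGIB-REP objective −I(Z;Ỹ) + λ·I(Z;Ã)) among all random variables Z conditionally independent of Ỹ given Ã, for every λ ∈ [0,1]. -/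
open scoped Classical BigOperators

section Aux

variable {Ω : Type*} [Fintype Ω] (P : Ω → ℝ)

lemma pm_nonneg (hP0 : ∀ ω, 0 ≤ P ω) {α : Type*} [Fintype α] (X : Ω → α) (x : α) :
    0 ≤ pm P X x :=
  Finset.sum_nonneg fun ω _ => by split <;> simp [hP0 ω]

lemma pm_sum_one (hP1 : ∑ ω, P ω = 1) {α : Type*} [Fintype α] (X : Ω → α) :
    ∑ x, pm P X x = 1 := by
  unfold pm
  rw [Finset.sum_comm]
  simpa using hP1

lemma pm_comp {α γ' : Type*} [Fintype α] [Fintype γ'] (X : Ω → α) (f : α → γ') (c : γ') :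
    pm P (fun ω => f (X ω)) c = ∑ a, if f a = c then pm P X a else 0 := by
  unfold pm
  have h : ∀ a : α, (if f a = c then ∑ ω, if X ω = a then P ω else 0 else 0)
      = ∑ ω, if X ω = a then (if f a = c then P ω else 0) else 0 := by
    intro a; by_cases h : f a = c <;> simp [h]
  rw [Finset.sum_congr rfl fun a _ => h a, Finset.sum_comm]
  refine Finset.sum_congr rfl fun ω _ => ?_
  simp

variable {α β γ : Type*} [Fintype α] [Fintype β] [Fintype γ]

lemma pm_marg_y (X : Ω → α) (Y : Ω → β) (Z : Ω → γ) (x : α) (z : γ) :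
    pm P (fun ω => (X ω, Z ω)) (x, z)
      = ∑ y, pm P (fun ω => (X ω, Y ω, Z ω)) (x, y, z) := by
  have h := pm_comp P (fun ω => (X ω, Y ω, Z ω)) (fun t => (t.1, t.2.2)) (x, z)
  simp only [] at h
  rw [show (fun ω => (X ω, Z ω))
      = (fun ω => ((fun t : α × β × γ => (t.1, t.2.2)) (X ω, Y ω, Z ω))) from rfl, h]
  rw [Fintype.sum_prod_type]
  simp [Fintype.sum_prod_type, Prod.ext_iff, ite_and, Finset.sum_ite_eq, Finset.sum_ite_eq']

lemma pm_marg_x (X : Ω → α) (Y : Ω → β) (Z : Ω → γ) (y : β) (z : γ) :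
    pm P (fun ω => (Y ω, Z ω)) (y, z)
      = ∑ x, pm P (fun ω => (X ω, Y ω, Z ω)) (x, y, z) := by
  have h := pm_comp P (fun ω => (X ω, Y ω, Z ω)) (fun t => t.2) (y, z)
  rw [show (fun ω => (Y ω, Z ω))
      = (fun ω => ((fun t : α × β × γ => t.2) (X ω, Y ω, Z ω))) from rfl, h]
  rw [Fintype.sum_prod_type]
  simp [Fintype.sum_prod_type, Prod.ext_iff, ite_and, Finset.sum_ite_eq, Finset.sum_ite_eq']

lemma pm_marg_xy (X : Ω → α) (Y : Ω → β) (Z : Ω → γ) (z : γ) :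
    pm P Z z = ∑ x, ∑ y, pm P (fun ω => (X ω, Y ω, Z ω)) (x, y, z) := by
  have h := pm_comp P (fun ω => (X ω, Y ω, Z ω)) (fun t => t.2.2) z
  rw [show (Z : Ω → γ)
      = (fun ω => ((fun t : α × β × γ => t.2.2) (X ω, Y ω, Z ω))) from rfl, h]
  rw [Fintype.sum_prod_type]
  refine Finset.sum_congr rfl fun x _ => ?_
  rw [Fintype.sum_prod_type]
  simp [Finset.sum_ite_eq, Finset.sum_ite_eq']

lemma Hf_comp_inj {γ' : Type*} [Fintype γ'] (X : Ω → α) (f : α → γ')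
    (hf : Function.Injective f) :
    Hf P (fun ω => f (X ω)) = Hf P X := by
  unfold Hf
  congr 1
  have h0 : ∀ c, c ∉ Finset.univ.image f → pm P (fun ω => f (X ω)) c = 0 := by
    intro c hc
    rw [pm_comp]
    refine Finset.sum_eq_zero fun a _ => ?_
    have : f a ≠ c := fun h => hc (by simpa [← h] using Finset.mem_image_of_mem f (Finset.mem_univ a))
    simp [this]
  have hfx : ∀ a, pm P (fun ω => f (X ω)) (f a) = pm P X a := by
    intro a
    rw [pm_comp, Finset.sum_eq_single a]
    · simp
    · intro b _ hb
      have : f b ≠ f a := fun h => hb (hf h)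
      simp [this]
    · simp
  rw [← Finset.sum_subset (Finset.subset_univ (Finset.univ.image f))
      (fun c _ hc => by rw [h0 c hc]; simp)]
  rw [Finset.sum_image (fun a _ b _ h => hf h)]
  simp [hfx]

lemma CMI_eq_sum (X : Ω → α) (Y : Ω → β) (Z : Ω → γ) :
    CMI P X Y Z = ∑ x, ∑ y, ∑ z,
      pm P (fun ω => (X ω, Y ω, Z ω)) (x, y, z) *
        (Real.log (pm P (fun ω => (X ω, Y ω, Z ω)) (x, y, z))
          + Real.log (pm P Z z)
          - Real.log (pm P (fun ω => (X ω, Z ω)) (x, z))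
          - Real.log (pm P (fun ω => (Y ω, Z ω)) (y, z))) := by
  set p := pm P (fun ω => (X ω, Y ω, Z ω)) with hp
  set q1 := pm P (fun ω => (X ω, Z ω)) with hq1d
  set q2 := pm P (fun ω => (Y ω, Z ω)) with hq2d
  set r := pm P Z with hrd
  have e1 : Hf P (fun ω => (X ω, Z ω))
      = -∑ x, ∑ y, ∑ z, p (x, y, z) * Real.log (q1 (x, z)) := by
    unfold Hf
    rw [Fintype.sum_prod_type]
    congr 1
    refine Finset.sum_congr rfl fun x _ => ?_
    rw [Finset.sum_comm]
    refine Finset.sum_congr rfl fun z _ => ?_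
    rw [show pm P (fun ω => (X ω, Z ω)) (x, z) = q1 (x, z) from rfl,
        show (q1 (x,z) : ℝ) * Real.log (q1 (x,z)) = (∑ y, p (x,y,z)) * Real.log (q1 (x,z)) by
          rw [← pm_marg_y P X Y Z x z],
        Finset.sum_mul]
  have e2 : Hf P (fun ω => (Y ω, Z ω))
      = -∑ x, ∑ y, ∑ z, p (x, y, z) * Real.log (q2 (y, z)) := by
    unfold Hf
    rw [Fintype.sum_prod_type]
    congr 1
    calc ∑ y, ∑ z, q2 (y, z) * Real.log (q2 (y, z))
        = ∑ y, ∑ z, ∑ x, p (x, y, z) * Real.log (q2 (y, z)) := by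
          refine Finset.sum_congr rfl fun y _ => Finset.sum_congr rfl fun z _ => ?_
          rw [show (q2 (y,z) : ℝ) * Real.log (q2 (y,z))
              = (∑ x, p (x,y,z)) * Real.log (q2 (y,z)) by rw [← pm_marg_x P X Y Z y z],
            Finset.sum_mul]
      _ = ∑ y, ∑ x, ∑ z, p (x, y, z) * Real.log (q2 (y, z)) :=
          Finset.sum_congr rfl fun y _ => Finset.sum_comm
      _ = ∑ x, ∑ y, ∑ z, p (x, y, z) * Real.log (q2 (y, z)) := Finset.sum_comm
  have e3 : Hf P (fun ω => (X ω, Y ω, Z ω))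
      = -∑ x, ∑ y, ∑ z, p (x, y, z) * Real.log (p (x, y, z)) := by
    unfold Hf
    rw [Fintype.sum_prod_type]
    congr 1
    refine Finset.sum_congr rfl fun x _ => ?_
    rw [Fintype.sum_prod_type]
  have e4 : Hf P Z = -∑ x, ∑ y, ∑ z, p (x, y, z) * Real.log (r z) := by
    unfold Hf
    have : ∀ z, pm P Z z * Real.log (pm P Z z)
        = ∑ x, ∑ y, p (x, y, z) * Real.log (r z) := by
      intro z
      rw [show pm P Z z * Real.log (pm P Z z)
          = (∑ x, ∑ y, p (x,y,z)) * Real.log (r z) by rw [← pm_marg_xy P X Y Z z],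
        Finset.sum_mul]
      exact Finset.sum_congr rfl fun x _ => Finset.sum_mul _ _ _
    rw [Finset.sum_congr rfl fun z _ => this z, Finset.sum_comm]
    congr 1
    exact Finset.sum_congr rfl fun x _ => Finset.sum_comm
  unfold CMI
  rw [e1, e2, e3, e4]
  simp only [mul_add, mul_sub, Finset.sum_add_distrib, Finset.sum_sub_distrib]
  ring

lemma CMI_nonneg (hP0 : ∀ ω, 0 ≤ P ω) (hP1 : ∑ ω, P ω = 1)
    (X : Ω → α) (Y : Ω → β) (Z : Ω → γ) : 0 ≤ CMI P X Y Z := by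
  rw [CMI_eq_sum P X Y Z]
  set p := pm P (fun ω => (X ω, Y ω, Z ω)) with hpd
  set q1 := pm P (fun ω => (X ω, Z ω)) with hq1d
  set q2 := pm P (fun ω => (Y ω, Z ω)) with hq2d
  set r := pm P Z with hrd
  have hp0 : ∀ t, 0 ≤ p t := fun t => pm_nonneg P hP0 _ t
  have hq10 : ∀ t, 0 ≤ q1 t := fun t => pm_nonneg P hP0 _ t
  have hq20 : ∀ t, 0 ≤ q2 t := fun t => pm_nonneg P hP0 _ t
  have hr0 : ∀ t, 0 ≤ r t := fun t => pm_nonneg P hP0 _ t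
  have hq1 : ∀ x z, q1 (x, z) = ∑ y, p (x, y, z) := fun x z => pm_marg_y P X Y Z x z
  have hq2 : ∀ y z, q2 (y, z) = ∑ x, p (x, y, z) := fun y z => pm_marg_x P X Y Z y z
  have hr : ∀ z, r z = ∑ x, ∑ y, p (x, y, z) := fun z => pm_marg_xy P X Y Z z
  have hpq1 : ∀ x y z, p (x, y, z) ≤ q1 (x, z) := fun x y z => by
    rw [hq1]
    exact Finset.single_le_sum (f := fun y => p (x, y, z)) (fun y _ => hp0 _) (Finset.mem_univ y)
  have hpq2 : ∀ x y z, p (x, y, z) ≤ q2 (y, z) := fun x y z => by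
    rw [hq2]
    exact Finset.single_le_sum (f := fun x => p (x, y, z)) (fun x _ => hp0 _) (Finset.mem_univ x)
  have hpr : ∀ x y z, p (x, y, z) ≤ r z := fun x y z => by
    rw [hr]
    calc p (x, y, z) ≤ ∑ y, p (x, y, z) :=
          Finset.single_le_sum (f := fun y => p (x, y, z)) (fun y _ => hp0 _) (Finset.mem_univ y)
      _ ≤ ∑ x, ∑ y, p (x, y, z) :=
          Finset.single_le_sum (f := fun x => ∑ y, p (x, y, z))
            (fun x _ => Finset.sum_nonneg fun y _ => hp0 _) (Finset.mem_univ x)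
  have key : ∀ x y z,
      (if 0 < p (x, y, z) then p (x, y, z) - q1 (x, z) * q2 (y, z) / r z else 0)
        ≤ p (x, y, z) * (Real.log (p (x, y, z)) + Real.log (r z)
            - Real.log (q1 (x, z)) - Real.log (q2 (y, z))) := by
    intro x y z
    by_cases hp : 0 < p (x, y, z)
    · have hq1p : 0 < q1 (x, z) := lt_of_lt_of_le hp (hpq1 x y z)
      have hq2p : 0 < q2 (y, z) := lt_of_lt_of_le hp (hpq2 x y z)
      have hrp : 0 < r z := lt_of_lt_of_le hp (hpr x y z)
      rw [if_pos hp]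
      have hlog := Real.log_le_sub_one_of_pos
        (show 0 < q1 (x, z) * q2 (y, z) / (p (x, y, z) * r z) by positivity)
      rw [Real.log_div (by positivity) (by positivity),
          Real.log_mul (ne_of_gt hq1p) (ne_of_gt hq2p),
          Real.log_mul (ne_of_gt hp) (ne_of_gt hrp)] at hlog
      have h2 : 1 - q1 (x, z) * q2 (y, z) / (p (x, y, z) * r z)
          ≤ Real.log (p (x, y, z)) + Real.log (r z)
            - Real.log (q1 (x, z)) - Real.log (q2 (y, z)) := by linarith
      have h3 := mul_le_mul_of_nonneg_left h2 hp.le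
      have heq : p (x, y, z) * (1 - q1 (x, z) * q2 (y, z) / (p (x, y, z) * r z))
          = p (x, y, z) - q1 (x, z) * q2 (y, z) / r z := by
        field_simp
      linarith
    · have hzero : p (x, y, z) = 0 := le_antisymm (not_lt.1 hp) (hp0 _)
      rw [if_neg hp, hzero]
      simp
  have step1 : ∑ x, ∑ y, ∑ z,
      (if 0 < p (x, y, z) then p (x, y, z) - q1 (x, z) * q2 (y, z) / r z else 0)
      ≤ ∑ x, ∑ y, ∑ z, p (x, y, z) * (Real.log (p (x, y, z)) + Real.log (r z)
          - Real.log (q1 (x, z)) - Real.log (q2 (y, z))) := by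
    refine Finset.sum_le_sum fun x _ => Finset.sum_le_sum fun y _ =>
      Finset.sum_le_sum fun z _ => key x y z
  have split : ∀ x y z,
      (if 0 < p (x, y, z) then p (x, y, z) - q1 (x, z) * q2 (y, z) / r z else 0)
        = p (x, y, z) - (if 0 < p (x, y, z) then q1 (x, z) * q2 (y, z) / r z else 0) := by
    intro x y z
    by_cases hp : 0 < p (x, y, z)
    · rw [if_pos hp, if_pos hp]
    · have hzero : p (x, y, z) = 0 := le_antisymm (not_lt.1 hp) (hp0 _)
      rw [if_neg hp, if_neg hp, hzero, sub_zero]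
  have hsum1 : ∑ x, ∑ y, ∑ z, p (x, y, z) = 1 := by
    have h1 := pm_sum_one P hP1 (fun ω => (X ω, Y ω, Z ω))
    simp only [Fintype.sum_prod_type] at h1
    exact h1
  have hineq2 : ∀ x y z,
      (if 0 < p (x, y, z) then q1 (x, z) * q2 (y, z) / r z else 0)
        ≤ (if 0 < r z then q1 (x, z) * q2 (y, z) / r z else 0) := by
    intro x y z
    by_cases hp : 0 < p (x, y, z)
    · rw [if_pos hp, if_pos (lt_of_lt_of_le hp (hpr x y z))]
    · rw [if_neg hp]
      by_cases hr' : 0 < r z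
      · rw [if_pos hr']
        exact div_nonneg (mul_nonneg (hq10 _) (hq20 _)) (hr0 _)
      · rw [if_neg hr']
  have hq1r : ∀ z, ∑ x, q1 (x, z) = r z := by
    intro z; rw [hr]
    exact Finset.sum_congr rfl fun x _ => hq1 x z
  have hq2r : ∀ z, ∑ y, q2 (y, z) = r z := by
    intro z
    rw [hr, Finset.sum_comm]
    exact Finset.sum_congr rfl fun y _ => hq2 y z
  have hsum2 : ∑ x, ∑ y, ∑ z, (if 0 < r z then q1 (x, z) * q2 (y, z) / r z else 0) = 1 := by
    have swap : ∑ x, ∑ y, ∑ z, (if 0 < r z then q1 (x, z) * q2 (y, z) / r z else 0)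
        = ∑ z, ∑ x, ∑ y, (if 0 < r z then q1 (x, z) * q2 (y, z) / r z else 0) :=
      calc ∑ x, ∑ y, ∑ z, (if 0 < r z then q1 (x, z) * q2 (y, z) / r z else 0)
          = ∑ x, ∑ z, ∑ y, (if 0 < r z then q1 (x, z) * q2 (y, z) / r z else 0) :=
            Finset.sum_congr rfl fun x _ => Finset.sum_comm
        _ = ∑ z, ∑ x, ∑ y, (if 0 < r z then q1 (x, z) * q2 (y, z) / r z else 0) :=
            Finset.sum_comm
    rw [swap]
    have hz : ∀ z, ∑ x, ∑ y, (if 0 < r z then q1 (x, z) * q2 (y, z) / r z else 0) = r z := by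
      intro z
      by_cases hr' : 0 < r z
      · simp only [if_pos hr']
        have : ∑ x, ∑ y, q1 (x, z) * q2 (y, z) / r z
            = (∑ x, q1 (x, z)) * (∑ y, q2 (y, z)) / r z := by
          rw [Finset.sum_mul, Finset.sum_div]
          refine Finset.sum_congr rfl fun x _ => ?_
          rw [Finset.mul_sum, Finset.sum_div]
        rw [this, hq1r, hq2r]
        field_simp
      · simp only [if_neg hr']
        have : r z = 0 := le_antisymm (not_lt.1 hr') (hr0 _)
        simp [this]
    rw [Finset.sum_congr rfl fun z _ => hz z]
    exact pm_sum_one P hP1 Z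
  have step2 : (1 : ℝ) - 1 ≤ ∑ x, ∑ y, ∑ z,
      (if 0 < p (x, y, z) then p (x, y, z) - q1 (x, z) * q2 (y, z) / r z else 0) := by
    have e : ∑ x, ∑ y, ∑ z,
        (if 0 < p (x, y, z) then p (x, y, z) - q1 (x, z) * q2 (y, z) / r z else 0)
        = (∑ x, ∑ y, ∑ z, p (x, y, z))
          - ∑ x, ∑ y, ∑ z, (if 0 < p (x, y, z) then q1 (x, z) * q2 (y, z) / r z else 0) := by
      simp only [split, Finset.sum_sub_distrib]
    rw [e, hsum1]
    have : ∑ x, ∑ y, ∑ z, (if 0 < p (x, y, z) then q1 (x, z) * q2 (y, z) / r z else 0)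
        ≤ ∑ x, ∑ y, ∑ z, (if 0 < r z then q1 (x, z) * q2 (y, z) / r z else 0) :=
      Finset.sum_le_sum fun x _ => Finset.sum_le_sum fun y _ =>
        Finset.sum_le_sum fun z _ => hineq2 x y z
    rw [hsum2] at this
    linarith
  linarith

lemma CMI_eq_zero_of_ci (hP0 : ∀ ω, 0 ≤ P ω)
    (X : Ω → α) (Y : Ω → β) (Z : Ω → γ)
    (h : ∀ x y z, pm P (fun ω => (X ω, Y ω, Z ω)) (x, y, z) * pm P Z z
      = pm P (fun ω => (X ω, Z ω)) (x, z) * pm P (fun ω => (Y ω, Z ω)) (y, z)) :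
    CMI P X Y Z = 0 := by
  rw [CMI_eq_sum P X Y Z]
  set p := pm P (fun ω => (X ω, Y ω, Z ω)) with hpd
  set q1 := pm P (fun ω => (X ω, Z ω)) with hq1d
  set q2 := pm P (fun ω => (Y ω, Z ω)) with hq2d
  set r := pm P Z with hrd
  have hp0 : ∀ t, 0 ≤ p t := fun t => pm_nonneg P hP0 _ t
  have hq1 : ∀ x z, q1 (x, z) = ∑ y, p (x, y, z) := fun x z => pm_marg_y P X Y Z x z
  have hq2 : ∀ y z, q2 (y, z) = ∑ x, p (x, y, z) := fun y z => pm_marg_x P X Y Z y z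
  have hr : ∀ z, r z = ∑ x, ∑ y, p (x, y, z) := fun z => pm_marg_xy P X Y Z z
  have hpq1 : ∀ x y z, p (x, y, z) ≤ q1 (x, z) := fun x y z => by
    rw [hq1]
    exact Finset.single_le_sum (f := fun y => p (x, y, z)) (fun y _ => hp0 _) (Finset.mem_univ y)
  have hpq2 : ∀ x y z, p (x, y, z) ≤ q2 (y, z) := fun x y z => by
    rw [hq2]
    exact Finset.single_le_sum (f := fun x => p (x, y, z)) (fun x _ => hp0 _) (Finset.mem_univ x)
  have hpr : ∀ x y z, p (x, y, z) ≤ r z := fun x y z => by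
    rw [hr]
    calc p (x, y, z) ≤ ∑ y, p (x, y, z) :=
          Finset.single_le_sum (f := fun y => p (x, y, z)) (fun y _ => hp0 _) (Finset.mem_univ y)
      _ ≤ ∑ x, ∑ y, p (x, y, z) :=
          Finset.single_le_sum (f := fun x => ∑ y, p (x, y, z))
            (fun x _ => Finset.sum_nonneg fun y _ => hp0 _) (Finset.mem_univ x)
  refine Finset.sum_eq_zero fun x _ => Finset.sum_eq_zero fun y _ =>
    Finset.sum_eq_zero fun z _ => ?_
  by_cases hp : 0 < p (x, y, z)
  · have hq1p : 0 < q1 (x, z) := lt_of_lt_of_le hp (hpq1 x y z)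
    have hq2p : 0 < q2 (y, z) := lt_of_lt_of_le hp (hpq2 x y z)
    have hrp : 0 < r z := lt_of_lt_of_le hp (hpr x y z)
    have hlog : Real.log (p (x, y, z)) + Real.log (r z)
        = Real.log (q1 (x, z)) + Real.log (q2 (y, z)) := by
      rw [← Real.log_mul (ne_of_gt hp) (ne_of_gt hrp),
          ← Real.log_mul (ne_of_gt hq1p) (ne_of_gt hq2p), h x y z]
    rw [show Real.log (p (x,y,z)) + Real.log (r z) - Real.log (q1 (x,z)) - Real.log (q2 (y,z))
        = 0 by linarith, mul_zero]
  · have : p (x, y, z) = 0 := le_antisymm (not_lt.1 hp) (hp0 _)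
    rw [this, zero_mul]
lemma Hf_swap (U : Ω → α) (V : Ω → β) :
    Hf P (fun ω => (U ω, V ω)) = Hf P (fun ω => (V ω, U ω)) := by
  have h := Hf_comp_inj P (fun ω => (V ω, U ω)) Prod.swap Prod.swap_injective
  dsimp only [Prod.swap] at h
  exact h

lemma Hf_t1 (U : Ω → α) (V : Ω → β) (W : Ω → γ) :
    Hf P (fun ω => (U ω, V ω, W ω)) = Hf P (fun ω => (U ω, W ω, V ω)) := by
  have h := Hf_comp_inj P (fun ω => (U ω, W ω, V ω))
    (fun t : α × γ × β => (t.1, t.2.2, t.2.1))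
    (Function.LeftInverse.injective
      (g := fun t : α × β × γ => (t.1, t.2.2, t.2.1)) fun t => rfl)
  dsimp only at h
  exact h

lemma Hf_t2 (U : Ω → α) (V : Ω → β) (W : Ω → γ) :
    Hf P (fun ω => (U ω, V ω, W ω)) = Hf P (fun ω => (W ω, V ω, U ω)) := by
  have h := Hf_comp_inj P (fun ω => (W ω, V ω, U ω))
    (fun t : γ × β × α => (t.2.2, t.2.1, t.1))
    (Function.LeftInverse.injective
      (g := fun t : α × β × γ => (t.2.2, t.2.1, t.1)) fun t => rfl)
  dsimp only at h
  exact h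

lemma Hf_t3 (U : Ω → α) (V : Ω → β) (W : Ω → γ) :
    Hf P (fun ω => (U ω, V ω, W ω)) = Hf P (fun ω => (V ω, U ω, W ω)) := by
  have h := Hf_comp_inj P (fun ω => (V ω, U ω, W ω))
    (fun t : β × α × γ => (t.2.1, t.1, t.2.2))
    (Function.LeftInverse.injective
      (g := fun t : α × β × γ => (t.2.1, t.1, t.2.2)) fun t => rfl)
  dsimp only at h
  exact h

lemma chain1 (A : Ω → α) (Y : Ω → β) (Z : Ω → γ) :
    MI P Z Y + CMI P Z A Y = MI P Z A + CMI P Z Y A := by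
  have h1 := Hf_swap P A Y
  have h2 := Hf_t1 P Z A Y
  unfold MI CMI
  linarith

lemma chain2 (A : Ω → α) (Y : Ω → β) (Z : Ω → γ) :
    MI P Z Y + CMI P A Y Z = MI P A Y + CMI P Z Y A := by
  have h1 := Hf_swap P A Z
  have h2 := Hf_swap P Y Z
  have h3 := Hf_swap P Y A
  have h4 := Hf_t2 P A Y Z
  unfold MI CMI
  linarith

lemma cmi_swap12 (A : Ω → α) (Y : Ω → β) (Z : Ω → γ) :
    CMI P Y Z A = CMI P Z Y A := by
  have h := Hf_t3 P Y Z A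
  unfold CMI
  linarith
end Aux

/-- for `λ ∈ [0,1]`, every `Z` with the Markov chain `Ỹ → Ã → Z`
satisfies `I(Z;Ỹ) − λ·I(Z;Ã) ≤ (1−λ)·I(Ã;Ỹ)`; moreover any such `Z*` with
`I(Ã;Ỹ|Z*) = 0` and `I(Z*;Ã|Ỹ) = 0` attains equality, and hence maximizes the
objective among all `Z` that are conditionally independent of `Ỹ` given `Ã`. -/
theorem stmt_14 {Ω α β : Type*} [Fintype Ω] [Fintype α] [Fintype β]
    (P : Ω → ℝ) (hP0 : ∀ ω, 0 ≤ P ω) (hP1 : ∑ ω, P ω = 1)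
    (A : Ω → α) (Y : Ω → β) (lam : ℝ) (hlam : lam ∈ Set.Icc (0 : ℝ) 1) :
    (∀ (γ : Type) [Fintype γ] (Z : Ω → γ), CondIndep P Y Z A →
        MI P Z Y - lam * MI P Z A ≤ (1 - lam) * MI P A Y)
    ∧ ∀ (γ : Type) [Fintype γ] (Zs : Ω → γ), CondIndep P Y Zs A →
        CMI P A Y Zs = 0 → CMI P Zs A Y = 0 →
        (MI P Zs Y - lam * MI P Zs A = (1 - lam) * MI P A Y
          ∧ ∀ (δ : Type) [Fintype δ] (Z : Ω → δ), CondIndep P Y Z A →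
              MI P Z Y - lam * MI P Z A ≤ MI P Zs Y - lam * MI P Zs A) := by

  obtain ⟨hl0, hl1⟩ := hlam
  have key : ∀ (γ : Type) [Fintype γ] (Z : Ω → γ), CondIndep P Y Z A →
      MI P Z Y - lam * MI P Z A ≤ (1 - lam) * MI P A Y := by
    intro γ _ Z hZ
    have c0 : CMI P Y Z A = 0 := CMI_eq_zero_of_ci P hP0 Y Z A hZ
    have c1 : CMI P Z Y A = 0 := by rw [← cmi_swap12]; exact c0
    have i1 := chain1 P A Y Z
    have i2 := chain2 P A Y Z
    have n1 : 0 ≤ CMI P Z A Y := CMI_nonneg P hP0 hP1 Z A Y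
    have n2 : 0 ≤ CMI P A Y Z := CMI_nonneg P hP0 hP1 A Y Z
    have hZA : MI P Z Y ≤ MI P Z A := by linarith
    have hAY : MI P Z Y ≤ MI P A Y := by linarith
    nlinarith [mul_nonneg hl0 (sub_nonneg.2 hZA),
      mul_nonneg (sub_nonneg.2 hl1) (sub_nonneg.2 hAY)]
  refine ⟨key, ?_⟩
  intro γ _ Zs hZs hA hB
  have c0 : CMI P Y Zs A = 0 := CMI_eq_zero_of_ci P hP0 Y Zs A hZs
  have c1 : CMI P Zs Y A = 0 := by rw [← cmi_swap12]; exact c0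
  have i1 := chain1 P A Y Zs
  have i2 := chain2 P A Y Zs
  have eq1 : MI P Zs Y = MI P Zs A := by linarith
  have eq2 : MI P Zs Y = MI P A Y := by linarith
  have heq : MI P Zs Y - lam * MI P Zs A = (1 - lam) * MI P A Y := by
    rw [← eq1, eq2]; ring
  exact ⟨heq, fun δ _ Z hZ => heq ▸ key δ Z hZ⟩
end
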